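/- arXiv:1512.08278 — 3 statements merged into one kernel-verified Lean document; each statement's English description precedes it below -/
import Mathlib

section
/- Let N ≥ 1 and let σ be a Hermitian matrix on ℂ² ⊗ ℂ^N. If (Tr(σ)/(2N-1))·𝟙_{2N} - σ is positive semidefinite, then σ is separable. -/
open Matrix Kronecker
open scoped ComplexOrder

noncomputable section

/-- A Hermitian matrix on ℂ^M ⊗ ℂ^N is separable if it is a finite sum of Kronecker
products of positive semidefinite matrices. -/
def IsSeparableMat {M N : ℕ} (σ : Matrix (Fin M × Fin N) (Fin M × Fin N) ℂ) : Prop :=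
  ∃ (k : ℕ) (A : Fin k → Matrix (Fin M) (Fin M) ℂ) (B : Fin k → Matrix (Fin N) (Fin N) ℂ),
    (∀ i, (A i).PosSemidef) ∧ (∀ i, (B i).PosSemidef) ∧ σ = ∑ i, A i ⊗ₖ B i

/-- Partial transpose on the first (Alice) factor. -/
def ptA {M N : ℕ} (ρ : Matrix (Fin M × Fin N) (Fin M × Fin N) ℂ) :
    Matrix (Fin M × Fin N) (Fin M × Fin N) ℂ :=
  fun p q => ρ (q.1, p.2) (p.1, q.2)

/-- Partial transpose on the second (Bob) factor. -/
def ptB {M N : ℕ} (ρ : Matrix (Fin M × Fin N) (Fin M × Fin N) ℂ) :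
    Matrix (Fin M × Fin N) (Fin M × Fin N) ℂ :=
  fun p q => ρ (p.1, q.2) (q.1, p.2)

/-- The second Pauli matrix σ₂. -/
def pauli2 : Matrix (Fin 2) (Fin 2) ℂ := !![0, -Complex.I; Complex.I, 0]

/-- ρ̃_A = (σ₂ ⊗ 𝟙_N) ρ^{T_A} (σ₂ ⊗ 𝟙_N). -/
def tildeA {N : ℕ} (ρ : Matrix (Fin 2 × Fin N) (Fin 2 × Fin N) ℂ) :
    Matrix (Fin 2 × Fin N) (Fin 2 × Fin N) ℂ :=
  (pauli2 ⊗ₖ (1 : Matrix (Fin N) (Fin N) ℂ)) * ptA ρ *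
    (pauli2 ⊗ₖ (1 : Matrix (Fin N) (Fin N) ℂ))

end

/-! Put `P := (Tr σ / (2N - 1)) • 𝟙 - σ`. Then `Tr P = Tr σ / (2N - 1)`, so `σ = Tr P • 𝟙 - P`, and
writing `P = ∑ vᵢ vᵢ*` it suffices that `|v|² 𝟙 - v v*` is separable for every `v ∈ ℂ² ⊗ ℂᴺ`.
A unitary on the qubit factor makes the two rows `s, t ∈ ℂᴺ` of `v` orthogonal. Writing `[x]` for
`x x*`, and with `p = |s|²`, `q = |t|²`, `a = s / p`, `b = t / q` and `Π` the orthogonal projection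
onto `span {s, t}`,
  `(p + q) 𝟙 - [v] = (p + q) 𝟙 ⊗ (𝟙 - Π) + q² [e₀ ⊗ b] + p² [e₁ ⊗ a]`
                    `+ p q ([e₀ ⊗ a - e₁ ⊗ b] + [e₀ ⊗ b] + [e₁ ⊗ a])`,
and the last bracket is the average of the product states `[e₀ + ω e₁] ⊗ [a - ω̄ b]` over the
fourth roots of unity `ω`. -/

section Projections

variable {n : Type*} [Fintype n]

def outer (v : n → ℂ) : Matrix n n ℂ := vecMulVec v (star v)

/-- The orthogonal projection onto `ℂ v`; it is `0` for `v = 0`, as `0⁻¹ = 0`. -/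
noncomputable def lineProj (v : n → ℂ) : Matrix n n ℂ := (star v ⬝ᵥ v)⁻¹ • outer v

omit [Fintype n] in
lemma outer_apply (v : n → ℂ) (i j : n) : outer v i j = v i * star (v j) := rfl

omit [Fintype n] in
lemma outer_smul (c : ℂ) (v : n → ℂ) : outer (c • v) = (c * star c) • outer v := by
  rw [outer, outer, star_smul, smul_vecMulVec, vecMulVec_smul, smul_smul]

lemma posSemidef_outer (v : n → ℂ) : (outer v).PosSemidef := posSemidef_vecMulVec_self_star v

lemma outer_mulVec (U : Matrix n n ℂ) (v : n → ℂ) : outer (U *ᵥ v) = U * outer v * Uᴴ := by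
  rw [outer, outer, mul_vecMulVec, vecMulVec_mul, star_mulVec]

lemma dotProduct_star_self_smul_inv_smul (v : n → ℂ) :
    (star v ⬝ᵥ v) • (star v ⬝ᵥ v)⁻¹ • v = v := by
  rcases eq_or_ne (star v ⬝ᵥ v) 0 with h | h
  · simp [dotProduct_star_self_eq_zero.mp h]
  · exact smul_inv_smul₀ h v

lemma dotProduct_star_self_smul_outer_inv_smul (v : n → ℂ) :
    (star v ⬝ᵥ v) • outer ((star v ⬝ᵥ v)⁻¹ • v) = lineProj v := by
  rw [lineProj, outer_smul, smul_smul, star_inv₀,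
    (dotProduct_star_self_nonneg v).isSelfAdjoint.star_eq]
  rcases eq_or_ne (star v ⬝ᵥ v) 0 with h | h
  · simp [h]
  · field_simp

lemma isStarProjection_lineProj (v : n → ℂ) : IsStarProjection (lineProj v) := by
  refine ⟨?_, (dotProduct_star_self_nonneg v).isSelfAdjoint.inv₀.smul
    (posSemidef_outer v).isHermitian⟩
  rw [IsIdempotentElem, lineProj, smul_mul_smul, outer, vecMulVec_mul_vecMulVec, vecMulVec_smul,
    smul_smul]
  congr 1
  rcases eq_or_ne (star v ⬝ᵥ v) 0 with h | h <;> field_simp [h]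

open scoped MatrixOrder in
lemma posSemidef_one_sub_lineProj_add_lineProj [DecidableEq n] {v w : n → ℂ}
    (h : star v ⬝ᵥ w = 0) : (1 - (lineProj v + lineProj w)).PosSemidef := by
  refine nonneg_iff_posSemidef.mp (IsStarProjection.one_sub_nonneg ?_)
  refine (isStarProjection_lineProj v).add (isStarProjection_lineProj w) ?_
  rw [lineProj, lineProj, smul_mul_smul, outer, outer, vecMulVec_mul_vecMulVec, h, zero_smul,
    vecMulVec_zero, smul_zero]

lemma smul_one_sub_outer_mulVec [DecidableEq n] {U : Matrix n n ℂ} (hU : U ∈ unitaryGroup n ℂ)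
    (v : n → ℂ) :
    (star (U *ᵥ v) ⬝ᵥ (U *ᵥ v)) • 1 - outer (U *ᵥ v) =
      U * ((star v ⬝ᵥ v) • 1 - outer v) * Uᴴ := by
  rw [outer_mulVec, star_mulVec, dotProduct_mulVec, vecMul_vecMul, ← star_eq_conjTranspose,
    mem_unitaryGroup_iff'.mp hU, vecMul_one, mul_sub, sub_mul, mul_smul_comm, smul_mul_assoc,
    mul_one, mem_unitaryGroup_iff.mp hU]

end Projections

lemma kronecker_one_mulVec_uncurry {R m n : Type*} [CommSemiring R] [Fintype m] [Fintype n]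
    [DecidableEq n] (U : Matrix m m R) (S : Matrix m n R) :
    (U ⊗ₖ (1 : Matrix n n R)) *ᵥ Function.uncurry S = Function.uncurry (U * S) := by
  ext ⟨i, j⟩
  simp [Function.uncurry, mulVec, dotProduct, mul_apply, Fintype.sum_prod_type, one_apply]

lemma exists_unitary_mul_eq_isDiag_mul_conjTranspose {𝕜 m n : Type*} [RCLike 𝕜] [Fintype m]
    [Fintype n] [DecidableEq m] (S : Matrix m n 𝕜) :
    ∃ U ∈ unitaryGroup m 𝕜, ∃ T : Matrix m n 𝕜, S = U * T ∧ (T * Tᴴ).IsDiag := by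
  have hS := isHermitian_mul_conjTranspose_self S
  set U : Matrix m m 𝕜 := (hS.eigenvectorUnitary : Matrix m m 𝕜)
  refine ⟨U, hS.eigenvectorUnitary.2, star U * S, ?_, ?_⟩
  · rw [← Matrix.mul_assoc, mem_unitaryGroup_iff.mp hS.eigenvectorUnitary.2, Matrix.one_mul]
  · have hdiag := hS.conjStarAlgAut_star_eigenvectorUnitary
    rw [Unitary.conjStarAlgAut_apply, Unitary.coe_star, star_star] at hdiag
    rw [conjTranspose_mul, ← star_eq_conjTranspose (star U), star_star, Matrix.mul_assoc,
      ← Matrix.mul_assoc S, ← Matrix.mul_assoc, hdiag]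
    exact isDiag_diagonal _

namespace IsSeparableMat

variable {M N : ℕ}

lemma zero : IsSeparableMat (0 : Matrix (Fin M × Fin N) (Fin M × Fin N) ℂ) :=
  ⟨0, ![], ![], nofun, nofun, by simp⟩

lemma kronecker {A : Matrix (Fin M) (Fin M) ℂ} {B : Matrix (Fin N) (Fin N) ℂ}
    (hA : A.PosSemidef) (hB : B.PosSemidef) : IsSeparableMat (A ⊗ₖ B) :=
  ⟨1, fun _ => A, fun _ => B, fun _ => hA, fun _ => hB, by simp⟩

lemma add {σ τ : Matrix (Fin M × Fin N) (Fin M × Fin N) ℂ}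
    (hσ : IsSeparableMat σ) (hτ : IsSeparableMat τ) : IsSeparableMat (σ + τ) := by
  obtain ⟨k, A, B, hA, hB, rfl⟩ := hσ
  obtain ⟨l, C, D, hC, hD, rfl⟩ := hτ
  refine ⟨k + l, Fin.append A C, Fin.append B D, Fin.addCases (by simpa using hA)
    (by simpa using hC), Fin.addCases (by simpa using hB) (by simpa using hD), ?_⟩
  simp [Fin.sum_univ_add]

lemma sum {ι : Type*} (s : Finset ι) {σ : ι → Matrix (Fin M × Fin N) (Fin M × Fin N) ℂ}
    (h : ∀ i ∈ s, IsSeparableMat (σ i)) : IsSeparableMat (∑ i ∈ s, σ i) :=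
  Finset.sum_induction σ IsSeparableMat (fun _ _ => .add) .zero h

lemma smul {σ : Matrix (Fin M × Fin N) (Fin M × Fin N) ℂ} {c : ℂ} (hc : 0 ≤ c)
    (hσ : IsSeparableMat σ) : IsSeparableMat (c • σ) := by
  obtain ⟨k, A, B, hA, hB, rfl⟩ := hσ
  exact ⟨k, fun i => c • A i, B, fun i => (hA i).smul hc, hB,
    by simp [Finset.smul_sum, smul_kronecker]⟩

lemma kronecker_one_conj {σ : Matrix (Fin M × Fin N) (Fin M × Fin N) ℂ}
    (Y : Matrix (Fin M) (Fin M) ℂ) (hσ : IsSeparableMat σ) :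
    IsSeparableMat ((Y ⊗ₖ (1 : Matrix (Fin N) (Fin N) ℂ)) * σ * (Y ⊗ₖ 1)ᴴ) := by
  obtain ⟨k, A, B, hA, hB, rfl⟩ := hσ
  refine ⟨k, fun i => Y * A i * Yᴴ, B, fun i => (hA i).mul_mul_conjTranspose_same Y, hB, ?_⟩
  simp [Finset.mul_sum, Finset.sum_mul, conjTranspose_kronecker, ← mul_kronecker_mul]

end IsSeparableMat

section QubitTimesQudit

variable {N : ℕ}

open Complex in
lemma isSeparableMat_outer_uncurry_add_kronecker_add_kronecker (a b : Fin N → ℂ) :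
    IsSeparableMat (outer (Function.uncurry ![a, -b]) + outer ![1, 0] ⊗ₖ outer b +
      outer ![0, 1] ⊗ₖ outer a) := by
  have h : outer (Function.uncurry ![a, -b]) + outer ![1, 0] ⊗ₖ outer b + outer ![0, 1] ⊗ₖ outer a
      = (1 / 4 : ℂ) • (outer ![1, 1] ⊗ₖ outer (a - b) + outer ![1, I] ⊗ₖ outer (a + I • b) +
        outer ![1, -1] ⊗ₖ outer (a + b) + outer ![1, -I] ⊗ₖ outer (a - I • b)) := by
    ext ⟨i, j⟩ ⟨k, l⟩
    fin_cases i <;> fin_cases k <;>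
      simp [outer_apply, kroneckerMap_apply] <;> ring_nf <;> simp only [I_sq] <;> ring
  rw [h]
  refine .smul (by positivity) (.add (.add (.add ?_ ?_) ?_) ?_) <;>
    exact .kronecker (posSemidef_outer _) (posSemidef_outer _)

/-- Stated for rows `p • a`, `q • b` rather than `s`, `t`: in these variables the decomposition
is a polynomial identity, with no division by `|s|²` or `|t|²`. -/
lemma smul_one_sub_outer_uncurry_eq (a b : Fin N → ℂ) {p q : ℂ} (hp : star p = p)
    (hq : star q = q) :
    (p + q) • 1 - outer (Function.uncurry ![p • a, q • b]) =
      (p + q) • (1 ⊗ₖ (1 - (p • outer a + q • outer b))) + q ^ 2 • (outer ![1, 0] ⊗ₖ outer b) +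
        p ^ 2 • (outer ![0, 1] ⊗ₖ outer a) +
        (p * q) • (outer (Function.uncurry ![a, -b]) + outer ![1, 0] ⊗ₖ outer b +
          outer ![0, 1] ⊗ₖ outer a) := by
  ext ⟨i, j⟩ ⟨k, l⟩
  rw [Complex.star_def] at hp hq
  fin_cases i <;> fin_cases k <;>
    simp [outer_apply, kroneckerMap_apply, one_apply, hp, hq] <;> (try split_ifs) <;> ring

lemma dotProduct_star_uncurry_self (S : Fin 2 → Fin N → ℂ) :
    star (Function.uncurry S) ⬝ᵥ Function.uncurry S =
      star (S 0) ⬝ᵥ S 0 + star (S 1) ⬝ᵥ S 1 := by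
  simp [dotProduct, Fintype.sum_prod_type, Fin.sum_univ_two]

lemma isSeparableMat_smul_one_sub_outer_of_orthogonal {S : Fin 2 → Fin N → ℂ}
    (h : star (S 0) ⬝ᵥ S 1 = 0) :
    IsSeparableMat ((star (Function.uncurry S) ⬝ᵥ Function.uncurry S) • 1 -
      outer (Function.uncurry S)) := by
  set p := star (S 0) ⬝ᵥ S 0
  set q := star (S 1) ⬝ᵥ S 1
  have hp : 0 ≤ p := dotProduct_star_self_nonneg _
  have hq : 0 ≤ q := dotProduct_star_self_nonneg _
  have hS : Function.uncurry S = Function.uncurry ![p • p⁻¹ • S 0, q • q⁻¹ • S 1] := by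
    congr 1
    ext i : 1
    fin_cases i <;> simp [p, q, dotProduct_star_self_smul_inv_smul]
  rw [dotProduct_star_uncurry_self, hS, smul_one_sub_outer_uncurry_eq _ _
    hp.isSelfAdjoint.star_eq hq.isSelfAdjoint.star_eq, dotProduct_star_self_smul_outer_inv_smul,
    dotProduct_star_self_smul_outer_inv_smul]
  refine .add (.add (.add ?_ ?_) ?_) ?_
  · exact .smul (add_nonneg hp hq) (.kronecker .one (posSemidef_one_sub_lineProj_add_lineProj h))
  · exact .smul (pow_nonneg hq 2) (.kronecker (posSemidef_outer _) (posSemidef_outer _))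
  · exact .smul (pow_nonneg hp 2) (.kronecker (posSemidef_outer _) (posSemidef_outer _))
  · exact .smul (mul_nonneg hp hq) (isSeparableMat_outer_uncurry_add_kronecker_add_kronecker _ _)

lemma isSeparableMat_smul_one_sub_outer (v : Fin 2 × Fin N → ℂ) :
    IsSeparableMat ((star v ⬝ᵥ v) • 1 - outer v) := by
  obtain ⟨U, hU, T, hT, hdiag⟩ := exists_unitary_mul_eq_isDiag_mul_conjTranspose (Function.curry v)
  have hv : v = (U ⊗ₖ (1 : Matrix (Fin N) (Fin N) ℂ)) *ᵥ Function.uncurry T := by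
    rw [kronecker_one_mulVec_uncurry, ← hT, Function.uncurry_curry]
  have horth : star (T 0) ⬝ᵥ T 1 = 0 := by
    rw [dotProduct_comm, ← hdiag (show (1 : Fin 2) ≠ 0 by decide)]
    rfl
  rw [hv, smul_one_sub_outer_mulVec (kronecker_mem_unitary hU (one_mem _))]
  exact (isSeparableMat_smul_one_sub_outer_of_orthogonal horth).kronecker_one_conj U

lemma isSeparableMat_trace_smul_one_sub {P : Matrix (Fin 2 × Fin N) (Fin 2 × Fin N) ℂ}
    (hP : P.PosSemidef) : IsSeparableMat (P.trace • 1 - P) := by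
  obtain ⟨m, v, rfl⟩ := posSemidef_iff_eq_sum_vecMulVec.mp hP
  have h : (∑ i, vecMulVec (v i) (star (v i))).trace • 1 - ∑ i, vecMulVec (v i) (star (v i)) =
      ∑ i, ((star (v i) ⬝ᵥ v i) • 1 - outer (v i)) := by
    simp [trace_sum, trace_vecMulVec, dotProduct_comm, Finset.sum_smul, outer]
  rw [h]
  exact .sum _ fun i _ => isSeparableMat_smul_one_sub_outer (v i)

end QubitTimesQudit

theorem stmt3_general {N : ℕ}
    (σ : Matrix (Fin 2 × Fin N) (Fin 2 × Fin N) ℂ)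
    (hpos : ((σ.trace / ((2 * (N : ℝ) - 1 : ℝ) : ℂ)) •
        (1 : Matrix (Fin 2 × Fin N) (Fin 2 × Fin N) ℂ) - σ).PosSemidef) :
    IsSeparableMat σ := by
  set d : ℂ := ((2 * (N : ℝ) - 1 : ℝ) : ℂ) with hd
  have hd0 : d ≠ 0 := by
    rw [hd, Complex.ofReal_ne_zero]
    exact_mod_cast (by omega : 2 * (N : ℤ) - 1 ≠ 0)
  have htr : ((σ.trace / d) • 1 - σ).trace = σ.trace / d := by
    rw [trace_sub, trace_smul, trace_one, smul_eq_mul, Fintype.card_prod, Fintype.card_fin,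
      Fintype.card_fin]
    field_simp
    rw [hd]
    push_cast
    ring
  have hsep := isSeparableMat_trace_smul_one_sub hpos
  rwa [htr, sub_sub_cancel] at hsep

theorem stmt3 {N : ℕ} (hN : 1 ≤ N)
    (σ : Matrix (Fin 2 × Fin N) (Fin 2 × Fin N) ℂ) (hσ : σ.IsHermitian)
    (hpos : ((σ.trace / ((2 * (N : ℝ) - 1 : ℝ) : ℂ)) •
        (1 : Matrix (Fin 2 × Fin N) (Fin 2 × Fin N) ℂ) - σ).PosSemidef) :
    IsSeparableMat σ :=
  stmt3_general σ hpos
end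

section
/- Sufficient separability criterion 4: Let N ≥ 2 and let σ be a Hermitian matrix on ℂ² ⊗ ℂ^N. If σ - σ̃_A/2 is positive definite, or if σ̃_A - σ/2 is positive definite, then σ is separable. -/
/-!
The six eigenstates `φ_d` of the Pauli matrices form a 2-design on `ℂ²`, so for every `X` on
`ℂ² ⊗ ℂ^N` we have `∑_d |φ_d⟩⟨φ_d| ⊗ ⟨φ_d|X|φ_d⟩ = X + 𝟙 ⊗ tr_A X = 2 X + X̃_A`.
For `X = σ - σ̃_A / 2` the right-hand side is `(3/2) σ`, so if `X ≥ 0` every compression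
`⟨φ_d|X|φ_d⟩` is positive semidefinite and `σ` is separable. The second hypothesis is the first
one for `σ̃_A`, because `ρ ↦ ρ̃_A` is an involution; it also preserves separability, since
`(A ⊗ B)~ = (σ₂ Aᵀ σ₂) ⊗ B` with `σ₂ Aᵀ σ₂ ≥ 0` whenever `A ≥ 0`.
-/

open Matrix Kronecker
open scoped ComplexOrder

namespace Matrix

variable {ι κ R : Type*} [Fintype ι] [Ring R] [PartialOrder R] [StarRing R]

/-- `(⟨c| ⊗ 𝟙) X (|c⟩ ⊗ 𝟙)`. -/
def compressLeft (c : ι → R) (X : Matrix (ι × κ) (ι × κ) R) : Matrix κ κ R :=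
  fun j l => ∑ i, ∑ k, star (c i) * X (i, j) (k, l) * c k

theorem PosSemidef.compressLeft [Fintype κ] [DecidableEq κ] {X : Matrix (ι × κ) (ι × κ) R}
    (hX : X.PosSemidef) (c : ι → R) : (X.compressLeft c).PosSemidef := by
  convert hX.conjTranspose_mul_mul_same
    (of fun p l => if p.2 = l then c p.1 else 0 : Matrix (ι × κ) κ R)
  ext j l
  simp only [Matrix.compressLeft, mul_apply, Fintype.sum_prod_type, conjTranspose_apply, of_apply,
    apply_ite star, star_zero, ite_mul, zero_mul, mul_ite, mul_zero, Finset.sum_ite_eq',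
    Finset.mem_univ, if_true, Finset.sum_mul]
  exact Finset.sum_comm

end Matrix

theorem ptA_kronecker {M N : ℕ} (A : Matrix (Fin M) (Fin M) ℂ) (B : Matrix (Fin N) (Fin N) ℂ) :
    ptA (A ⊗ₖ B) = Aᵀ ⊗ₖ B :=
  rfl

theorem conjTranspose_pauli2 : pauli2ᴴ = pauli2 := by
  ext i j
  fin_cases i <;> fin_cases j <;> simp [pauli2]

def tildeALinearMap (N : ℕ) :
    Matrix (Fin 2 × Fin N) (Fin 2 × Fin N) ℂ →ₗ[ℂ] Matrix (Fin 2 × Fin N) (Fin 2 × Fin N) ℂ where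
  toFun := tildeA
  map_add' ρ τ := by
    change _ * (ptA ρ + ptA τ) * _ = _
    simp only [tildeA, mul_add, add_mul]
  map_smul' a ρ := by
    change _ * (a • ptA ρ) * _ = _
    simp only [tildeA, Matrix.mul_smul, Matrix.smul_mul, RingHom.id_apply]

section

variable {N : ℕ}

@[simp]
theorem tildeALinearMap_apply (ρ : Matrix (Fin 2 × Fin N) (Fin 2 × Fin N) ℂ) :
    tildeALinearMap N ρ = tildeA ρ :=
  rfl

theorem tildeA_apply (ρ : Matrix (Fin 2 × Fin N) (Fin 2 × Fin N) ℂ) (i k : Fin 2) (j l : Fin N) :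
    tildeA ρ (i, j) (k, l) =
      (if i = k then ρ (0, j) (0, l) + ρ (1, j) (1, l) else 0) - ρ (i, j) (k, l) := by
  fin_cases i <;> fin_cases k <;>
    simp [tildeA, ptA, pauli2, mul_apply, Fintype.sum_prod_type, Fin.sum_univ_two, one_apply] <;>
    ring_nf <;> simp [Complex.I_sq]

theorem tildeA_tildeA (ρ : Matrix (Fin 2 × Fin N) (Fin 2 × Fin N) ℂ) : tildeA (tildeA ρ) = ρ := by
  ext ⟨i, j⟩ ⟨k, l⟩
  simp only [tildeA_apply]
  split_ifs <;> simp; ring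

theorem tildeA_kronecker (A : Matrix (Fin 2) (Fin 2) ℂ) (B : Matrix (Fin N) (Fin N) ℂ) :
    tildeA (A ⊗ₖ B) = (pauli2ᴴ * Aᵀ * pauli2) ⊗ₖ B := by
  rw [tildeA, ptA_kronecker, ← mul_kronecker_mul, ← mul_kronecker_mul, conjTranspose_pauli2,
    one_mul, mul_one]

theorem IsSeparableMat.tildeA {ρ : Matrix (Fin 2 × Fin N) (Fin 2 × Fin N) ℂ}
    (hρ : IsSeparableMat ρ) : IsSeparableMat (tildeA ρ) := by
  obtain ⟨n, A, B, hA, hB, rfl⟩ := hρ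
  refine ⟨n, fun i => pauli2ᴴ * (A i)ᵀ * pauli2, B,
    fun i => (hA i).transpose.conjTranspose_mul_mul_same _, hB, ?_⟩
  rw [← tildeALinearMap_apply, map_sum]
  simp only [tildeALinearMap_apply, tildeA_kronecker]

def pauliEigvec : Fin 6 → Fin 2 → ℂ :=
  ![![1, 0], ![0, 1], ![1, 1], ![1, -1], ![1, Complex.I], ![1, -Complex.I]]

-- The last four vectors have squared norm 2; with these weights the six normalized states count
-- equally.
noncomputable def pauliEigvecWeight : Fin 6 → ℂ := ![1, 1, 4⁻¹, 4⁻¹, 4⁻¹, 4⁻¹]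

theorem pauliEigvecWeight_nonneg (d : Fin 6) : 0 ≤ pauliEigvecWeight d := by
  fin_cases d <;> simp [pauliEigvecWeight]

theorem sum_pauliEigvec_kronecker_compressLeft
    (X : Matrix (Fin 2 × Fin N) (Fin 2 × Fin N) ℂ) :
    ∑ d, vecMulVec (pauliEigvec d) (star (pauliEigvec d)) ⊗ₖ
        (pauliEigvecWeight d • X.compressLeft (pauliEigvec d)) = (2 : ℂ) • X + tildeA X := by
  ext ⟨i, j⟩ ⟨k, l⟩
  simp only [Matrix.sum_apply, Fin.sum_univ_six, kroneckerMap_apply, vecMulVec_apply,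
    Matrix.smul_apply, compressLeft, Fin.sum_univ_two, Matrix.add_apply, tildeA_apply,
    Pi.star_apply, smul_eq_mul]
  fin_cases i <;> fin_cases k <;> simp [pauliEigvec, pauliEigvecWeight] <;> ring_nf <;>
    simp [Complex.I_sq] <;> ring

theorem isSeparableMat_of_posSemidef_sub_tildeA {σ : Matrix (Fin 2 × Fin N) (Fin 2 × Fin N) ℂ}
    (h : (σ - (2 : ℂ)⁻¹ • tildeA σ).PosSemidef) : IsSeparableMat σ := by
  set X := σ - (2 : ℂ)⁻¹ • tildeA σ
  have hX : (2 : ℂ) • X + tildeA X = (3 / 2 : ℂ) • σ := by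
    simp only [X, ← tildeALinearMap_apply, map_sub, map_smul]
    simp only [tildeALinearMap_apply, tildeA_tildeA]
    module
  refine ⟨6, fun d => vecMulVec (pauliEigvec d) (star (pauliEigvec d)),
    fun d => (2 / 3 : ℂ) • pauliEigvecWeight d • X.compressLeft (pauliEigvec d),
    fun d => posSemidef_vecMulVec_self_star _,
    fun d => ((h.compressLeft _).smul (pauliEigvecWeight_nonneg d)).smul (by positivity), ?_⟩
  calc σ = (2 / 3 : ℂ) • ((2 : ℂ) • X + tildeA X) := by rw [hX, smul_smul]; norm_num
    _ = _ := by
      rw [← sum_pauliEigvec_kronecker_compressLeft, Finset.smul_sum]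
      simp only [kronecker_smul]

end

theorem stmt7_general {N : ℕ}
    (σ : Matrix (Fin 2 × Fin N) (Fin 2 × Fin N) ℂ)
    (h : (σ - ((2 : ℂ))⁻¹ • tildeA σ).PosDef ∨ (tildeA σ - ((2 : ℂ))⁻¹ • σ).PosDef) :
    IsSeparableMat σ := by
  rcases h with h | h
  · exact isSeparableMat_of_posSemidef_sub_tildeA h.posSemidef
  · rw [← tildeA_tildeA σ]
    refine (isSeparableMat_of_posSemidef_sub_tildeA ?_).tildeA
    rw [tildeA_tildeA]
    exact h.posSemidef

/-- Sufficient separability criterion 4. -/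
theorem stmt7 {N : ℕ} (hN : 2 ≤ N)
    (σ : Matrix (Fin 2 × Fin N) (Fin 2 × Fin N) ℂ) (hσ : σ.IsHermitian)
    (h : (σ - ((2 : ℂ))⁻¹ • tildeA σ).PosDef ∨ (tildeA σ - ((2 : ℂ))⁻¹ • σ).PosDef) :
    IsSeparableMat σ :=
  stmt7_general σ h
end

section
/- Let N ≥ 1, let v ∈ ℂ² ⊗ ℂ^N be any vector, and write X := v v† in 2×2 block form X = [[X₁₁, X₁₂],[X₁₂†, X₂₂]] with N×N blocks X_{ij}. Define B := X₁₂ + (Tr(X₁₂†)·𝟙_N - X₁₂†) and, for a real α, Φ_α(X) := [[Tr(X₁₁)·𝟙_N, α·B],[α·B†, Tr(X₂₂)·𝟙_N]] (a matrix on ℂ² ⊗ ℂ^N). Then for every real α with |α| ≤ 1, the matrix Φ_α(X) is separable. -/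
open Matrix Kronecker
open scoped ComplexOrder

/-- The (a,b) block (N×N) of a matrix on ℂ² ⊗ ℂ^N. -/
noncomputable def blk {N : ℕ} (a b : Fin 2) (X : Matrix (Fin 2 × Fin N) (Fin 2 × Fin N) ℂ) :
    Matrix (Fin N) (Fin N) ℂ :=
  fun k l => X (a, k) (b, l)

/-- Assemble a matrix on ℂ² ⊗ ℂ^N from its four N×N blocks. -/
noncomputable def fromBlocks2 {N : ℕ} (A B C D : Matrix (Fin N) (Fin N) ℂ) :
    Matrix (Fin 2 × Fin N) (Fin 2 × Fin N) ℂ :=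
  fun p q =>
    if p.1 = 0 then (if q.1 = 0 then A p.2 q.2 else B p.2 q.2)
    else (if q.1 = 0 then C p.2 q.2 else D p.2 q.2)

/-!
Write `v = (x, y)`. Then `B = ⟪x, y⟫ 𝟙 + K` with `K = x y† - y x†` skew-Hermitian, so
`K = ∑ⱼ μⱼ wⱼ wⱼ†` for an orthonormal eigenbasis `(wⱼ)`, and
`Φ_α(X) = ∑ⱼ Mⱼ ⊗ wⱼ wⱼ†` with `Mⱼ = [[‖x‖², α (⟪x, y⟫ + μⱼ)], [α (⟪x, y⟫ + μⱼ)‾, ‖y‖²]]`.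
Conjugating the `wⱼ`-coordinate of `x` and of `y` preserves their norms and turns `⟪x, y⟫` into
`⟪x, y⟫ + μⱼ`, so `Mⱼ` is the convex combination with weights `(1 ± α) / 2` of the Gram matrices
of two pairs of vectors, hence positive semidefinite.
-/

namespace Matrix

variable {n : Type*} [Fintype n]

section ConjComponent

variable {R : Type*} [CommRing R]

theorem dotProduct_vecMulVec_mulVec (u x y w : n → R) :
    u ⬝ᵥ vecMulVec x y *ᵥ w = (u ⬝ᵥ x) * (y ⬝ᵥ w) := by
  rw [vecMulVec_mulVec, op_smul_eq_smul, dotProduct_smul, smul_eq_mul, mul_comm]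

variable [StarRing R]

/-- For a unit vector `w`, replaces the coordinate `star w ⬝ᵥ x` of `x` along `w` by its
conjugate. -/
def conjComponent (w x : n → R) : n → R :=
  x + (star (star w ⬝ᵥ x) - star w ⬝ᵥ x) • w

theorem star_conjComponent_dotProduct_conjComponent {w : n → R} (hw : star w ⬝ᵥ w = 1)
    (x y : n → R) :
    star (conjComponent w x) ⬝ᵥ conjComponent w y =
      star x ⬝ᵥ y + star w ⬝ᵥ (vecMulVec x (star y) - vecMulVec y (star x)) *ᵥ w := by
  simp only [conjComponent, star_add, star_smul, add_dotProduct, dotProduct_add, smul_dotProduct,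
    dotProduct_smul, smul_eq_mul, sub_mulVec, dotProduct_sub, dotProduct_vecMulVec_mulVec, hw,
    star_dotProduct x w, star_dotProduct y w, star_sub, star_star]
  ring

theorem star_conjComponent_dotProduct_self {w : n → R} (hw : star w ⬝ᵥ w = 1) (x : n → R) :
    star (conjComponent w x) ⬝ᵥ conjComponent w x = star x ⬝ᵥ x := by
  rw [star_conjComponent_dotProduct_conjComponent hw, sub_self, zero_mulVec, dotProduct_zero,
    add_zero]

end ConjComponent

section Gram

variable {𝕜 : Type*} [RCLike 𝕜]

theorem posSemidef_dotProduct_gram_two (a b : n → 𝕜) :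
    !![star a ⬝ᵥ a, star a ⬝ᵥ b; star b ⬝ᵥ a, star b ⬝ᵥ b].PosSemidef := by
  convert posSemidef_self_mul_conjTranspose (of ![star a, star b]) using 1
  ext i j
  fin_cases i <;> fin_cases j <;> simp [mul_apply, dotProduct, mul_comm]

theorem posSemidef_dotProduct_gram_two_smul_offDiag (a b : n → 𝕜) {α : ℝ} (hα : |α| ≤ 1) :
    !![star a ⬝ᵥ a, (α : 𝕜) * (star a ⬝ᵥ b);
      star ((α : 𝕜) * (star a ⬝ᵥ b)), star b ⬝ᵥ b].PosSemidef := by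
  obtain ⟨hα₁, hα₂⟩ := abs_le.mp hα
  have hconvex : !![star a ⬝ᵥ a, (α : 𝕜) * (star a ⬝ᵥ b);
      star ((α : 𝕜) * (star a ⬝ᵥ b)), star b ⬝ᵥ b] =
      ((1 + α) / 2) • !![star a ⬝ᵥ a, star a ⬝ᵥ b; star b ⬝ᵥ a, star b ⬝ᵥ b] +
      ((1 - α) / 2) • !![star a ⬝ᵥ a, star a ⬝ᵥ -b; star (-b) ⬝ᵥ a, star (-b) ⬝ᵥ -b] := by
    ext i j
    fin_cases i <;> fin_cases j <;>
      simp [star_dotProduct b a, RCLike.real_smul_eq_coe_mul, map_ofNat] <;> ring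
  rw [hconvex]
  exact ((posSemidef_dotProduct_gram_two a b).smul (by linarith)).add
    ((posSemidef_dotProduct_gram_two a (-b)).smul (by linarith))

end Gram

section Spectral

variable {𝕜 : Type*} [RCLike 𝕜]

theorem _root_.OrthonormalBasis.star_dotProduct_self
    (b : OrthonormalBasis n 𝕜 (EuclideanSpace 𝕜 n)) (j : n) :
    star ⇑(b j) ⬝ᵥ ⇑(b j) = 1 := by
  rw [dotProduct_comm, ← EuclideanSpace.inner_eq_star_dotProduct, inner_self_eq_norm_sq_to_K,
    b.orthonormal.1 j]
  simp

variable [DecidableEq n]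

theorem _root_.OrthonormalBasis.sum_vecMulVec_eq_one
    (b : OrthonormalBasis n 𝕜 (EuclideanSpace 𝕜 n)) :
    ∑ j, vecMulVec ⇑(b j) (star ⇑(b j)) = 1 := by
  have hU := mem_unitaryGroup_iff.mp
    ((EuclideanSpace.basisFun n 𝕜).toMatrix_orthonormalBasis_mem_unitary b)
  ext k l
  rw [← hU, sum_apply, mul_apply]
  rfl

theorem _root_.OrthonormalBasis.eq_sum_smul_vecMulVec_of_mulVec_eq_smul
    (b : OrthonormalBasis n 𝕜 (EuclideanSpace 𝕜 n)) {A : Matrix n n 𝕜} {μ : n → 𝕜}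
    (hA : ∀ j, A *ᵥ b j = μ j • ⇑(b j)) :
    A = ∑ j, μ j • vecMulVec ⇑(b j) (star ⇑(b j)) := by
  conv_lhs => rw [← mul_one A, ← b.sum_vecMulVec_eq_one]
  simp only [Finset.mul_sum, mul_vecMulVec, hA, smul_vecMulVec]

theorem exists_orthonormalBasis_mulVec_eq_smul_of_conjTranspose_eq_neg
    {K : Matrix n n ℂ} (hK : Kᴴ = -K) :
    ∃ (b : OrthonormalBasis n ℂ (EuclideanSpace ℂ n)) (μ : n → ℂ),
      ∀ j, K *ᵥ b j = μ j • ⇑(b j) := by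
  have hH : (-Complex.I • K).IsHermitian := by
    rw [IsHermitian, conjTranspose_smul, hK]
    simp
  refine ⟨hH.eigenvectorBasis, fun j => Complex.I * hH.eigenvalues j, fun j => ?_⟩
  calc K *ᵥ hH.eigenvectorBasis j
      = Complex.I • ((-Complex.I • K) *ᵥ hH.eigenvectorBasis j) := by
        rw [smul_mulVec, smul_smul]
        simp
    _ = (Complex.I * hH.eigenvalues j) • ⇑(hH.eigenvectorBasis j) := by
        rw [hH.mulVec_eigenvectorBasis, ← Complex.coe_smul, smul_smul]

end Spectral

end Matrix

theorem blk_vecMulVec_star {N : ℕ} (v : Fin 2 × Fin N → ℂ) (a b : Fin 2) :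
    blk a b (vecMulVec v (star v)) = vecMulVec (fun k => v (a, k)) (star fun k => v (b, k)) :=
  rfl

theorem fromBlocks2_sum_smul {N k : ℕ} (P : Fin k → Matrix (Fin N) (Fin N) ℂ)
    (p q r s : Fin k → ℂ) :
    fromBlocks2 (∑ j, p j • P j) (∑ j, q j • P j) (∑ j, r j • P j) (∑ j, s j • P j) =
      ∑ j, !![p j, q j; r j, s j] ⊗ₖ P j := by
  ext ⟨a, i⟩ ⟨b, l⟩
  fin_cases a <;> fin_cases b <;> simp [fromBlocks2, Matrix.sum_apply]

theorem isSeparableMat_fromBlocks2_sum_smul {N k : ℕ} {P : Fin k → Matrix (Fin N) (Fin N) ℂ}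
    (hP : ∀ j, (P j).PosSemidef) {p q r s : Fin k → ℂ}
    (hM : ∀ j, !![p j, q j; r j, s j].PosSemidef) :
    IsSeparableMat
      (fromBlocks2 (∑ j, p j • P j) (∑ j, q j • P j) (∑ j, r j • P j) (∑ j, s j • P j)) :=
  ⟨k, _, P, hM, hP, fromBlocks2_sum_smul P p q r s⟩

theorem isSeparableMat_fromBlocks2_vecMulVec_skew {N : ℕ} (x y : Fin N → ℂ) {α : ℝ}
    (hα : |α| ≤ 1) :
    let B := (y ⬝ᵥ star x) • (1 : Matrix (Fin N) (Fin N) ℂ) +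
      (vecMulVec x (star y) - vecMulVec y (star x))
    IsSeparableMat (fromBlocks2 ((x ⬝ᵥ star x) • 1) ((α : ℂ) • B) ((α : ℂ) • Bᴴ)
      ((y ⬝ᵥ star y) • 1)) := by
  intro B
  obtain ⟨w, μ, hw⟩ := exists_orthonormalBasis_mulVec_eq_smul_of_conjTranspose_eq_neg
    (K := vecMulVec x (star y) - vecMulVec y (star x)) (by simp [conjTranspose_vecMulVec])
  set P : Fin N → Matrix (Fin N) (Fin N) ℂ := fun j => vecMulVec ⇑(w j) (star ⇑(w j))
  set x' : Fin N → Fin N → ℂ := fun j => conjComponent ⇑(w j) x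
  set y' : Fin N → Fin N → ℂ := fun j => conjComponent ⇑(w j) y
  have hμ : ∀ j, star (x' j) ⬝ᵥ y' j = y ⬝ᵥ star x + μ j := fun j => by
    rw [star_conjComponent_dotProduct_conjComponent (w.star_dotProduct_self j), hw,
      dotProduct_smul, w.star_dotProduct_self, smul_eq_mul, mul_one, dotProduct_comm]
  have hdiag : ∀ z : Fin N → ℂ, (z ⬝ᵥ star z) • (1 : Matrix (Fin N) (Fin N) ℂ) =
      ∑ j, (star (conjComponent ⇑(w j) z) ⬝ᵥ conjComponent ⇑(w j) z) • P j := fun z => by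
    simp only [star_conjComponent_dotProduct_self (w.star_dotProduct_self _), ← Finset.smul_sum,
      P, w.sum_vecMulVec_eq_one, dotProduct_comm z]
  have hB : (α : ℂ) • B = ∑ j, ((α : ℂ) * (star (x' j) ⬝ᵥ y' j)) • P j := by
    simp only [B, hμ, mul_add, add_smul, smul_add, Finset.sum_add_distrib, ← smul_smul,
      ← Finset.smul_sum, ← w.eq_sum_smul_vecMulVec_of_mulVec_eq_smul hw, P,
      w.sum_vecMulVec_eq_one]
  have hBH : (α : ℂ) • Bᴴ = ∑ j, star ((α : ℂ) * (star (x' j) ⬝ᵥ y' j)) • P j := by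
    rw [← Complex.conj_ofReal, ← Complex.star_def, ← conjTranspose_smul, hB]
    simp [conjTranspose_sum, conjTranspose_smul, P, conjTranspose_vecMulVec]
  rw [hdiag x, hdiag y, hB, hBH]
  exact isSeparableMat_fromBlocks2_sum_smul (fun j => posSemidef_vecMulVec_self_star _)
    fun j => posSemidef_dotProduct_gram_two_smul_offDiag _ _ hα

theorem stmt13_general {N : ℕ}
    (v : Fin 2 × Fin N → ℂ) (α : ℝ) (hα : |α| ≤ 1)
    (X : Matrix (Fin 2 × Fin N) (Fin 2 × Fin N) ℂ)
    (hX : X = Matrix.vecMulVec v (star v))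
    (B : Matrix (Fin N) (Fin N) ℂ)
    (hB : B = blk 0 1 X +
      ((blk 0 1 X)ᴴ.trace • (1 : Matrix (Fin N) (Fin N) ℂ) - (blk 0 1 X)ᴴ)) :
    IsSeparableMat
      (fromBlocks2
        ((blk 0 0 X).trace • (1 : Matrix (Fin N) (Fin N) ℂ)) ((α : ℂ) • B)
        ((α : ℂ) • Bᴴ) ((blk 1 1 X).trace • (1 : Matrix (Fin N) (Fin N) ℂ))) := by
  subst hX hB
  simp only [blk_vecMulVec_star, conjTranspose_vecMulVec, star_star, trace_vecMulVec]
  rw [add_sub_left_comm]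
  exact isSeparableMat_fromBlocks2_vecMulVec_skew _ _ hα

theorem stmt13 {N : ℕ} (hN : 1 ≤ N)
    (v : Fin 2 × Fin N → ℂ) (α : ℝ) (hα : |α| ≤ 1)
    (X : Matrix (Fin 2 × Fin N) (Fin 2 × Fin N) ℂ)
    (hX : X = Matrix.vecMulVec v (star v))
    (B : Matrix (Fin N) (Fin N) ℂ)
    (hB : B = blk 0 1 X +
      ((blk 0 1 X)ᴴ.trace • (1 : Matrix (Fin N) (Fin N) ℂ) - (blk 0 1 X)ᴴ)) :
    IsSeparableMat
      (fromBlocks2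
        ((blk 0 0 X).trace • (1 : Matrix (Fin N) (Fin N) ℂ)) ((α : ℂ) • B)
        ((α : ℂ) • Bᴴ) ((blk 1 1 X).trace • (1 : Matrix (Fin N) (Fin N) ℂ))) :=
  stmt13_general v α hα X hX B hB
end
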